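/- Heredity of strong amalgamation bases under immersion: let T be an h-inductive theory, B a model of T which is an [h]-strong amalgamation basis of T, and A a model of T immersed in B. Then A is also an [h]-strong amalgamation basis of T. -/

import Mathlib

open FirstOrder FirstOrder.Language

universe u v w w'

namespace PositiveLogic

/-- Positive formulas with `n` free variables: built from `⊥`, atomic formulas,
`∧`, `∨` and `∃`. -/
inductive PosForm (L : FirstOrder.Language.{u, v}) : ℕ → Type (max u v)
  | falsum {n : ℕ} : PosForm L n
  | equal {n : ℕ} (t u : L.Term (Fin n)) : PosForm L n
  | rel {n l : ℕ} (R : L.Relations l) (ts : Fin l → L.Term (Fin n)) : PosForm L n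
  | and {n : ℕ} (φ ψ : PosForm L n) : PosForm L n
  | or {n : ℕ} (φ ψ : PosForm L n) : PosForm L n
  | ex {n : ℕ} (φ : PosForm L (n + 1)) : PosForm L n

variable {L : FirstOrder.Language.{u, v}}

/-- Realization of a positive formula in a structure. -/
def PosForm.Realize {M : Type w} [L.Structure M] :
    ∀ {n : ℕ}, PosForm L n → (Fin n → M) → Prop
  | _, .falsum, _ => False
  | _, .equal t u, v => t.realize v = u.realize v
  | _, .rel R ts, v => Structure.RelMap R fun i => (ts i).realize v
  | _, .and φ ψ, v => φ.Realize v ∧ ψ.Realize v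
  | _, .or φ ψ, v => φ.Realize v ∨ ψ.Realize v
  | _, .ex φ, v => ∃ x : M, φ.Realize (Fin.snoc v x)

/-- A positive sentence `φ` (element of `PosForm L 0`) holds in `M`. -/
def PosRealize (M : Type w) [L.Structure M] (φ : PosForm L 0) : Prop :=
  φ.Realize (Fin.elim0 : Fin 0 → M)

/-- `Diag⁺*(M)`: the set of positive `L`-sentences true in `M`. -/
def posTheory (M : Type w) [L.Structure M] : Set (PosForm L 0) :=
  {φ | PosRealize M φ}

/-- `T_u*(M)`, identified with the set of positive `L`-sentences whose negation
(an h-universal sentence) is true in `M`. -/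
def TuStar (M : Type w) [L.Structure M] : Set (PosForm L 0) :=
  {φ | ¬ PosRealize M φ}

/-- A basic h-inductive sentence `∀ x̄ (φ(x̄) → ψ(x̄))` with `φ, ψ` positive.
(A general h-inductive sentence, a finite conjunction of such, is equivalent to
the set of its conjuncts.) -/
structure HInd (L : FirstOrder.Language.{u, v}) : Type (max u v) where
  n : ℕ
  hyp : PosForm L n
  concl : PosForm L n

/-- Realization of a basic h-inductive sentence. -/
def HInd.Realize (s : HInd L) (M : Type w) [L.Structure M] : Prop :=
  ∀ v : Fin s.n → M, s.hyp.Realize v → s.concl.Realize v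

/-- `M` is a model of the h-inductive theory `T`. -/
def HModels (M : Type w) [L.Structure M] (T : Set (HInd L)) : Prop :=
  ∀ s ∈ T, s.Realize M

/-- `T_i*(M)`: the set of (basic) h-inductive `L`-sentences true in `M`. -/
def TiStar (M : Type w) [L.Structure M] : Set (HInd L) :=
  {s | s.Realize M}

/-- `T_u(T)`: the h-universal consequences of `T`, identified with the set of
positive sentences `φ` such that `¬φ` holds in every model of `T`. -/
def TuOf (T : Set (HInd L)) : Set (PosForm L 0) :=
  {φ | ∀ (M : Type (max u v)) [L.Structure M], HModels M T → ¬ PosRealize M φ}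

/-- A homomorphism is an immersion if it preserves and reflects all positive
formulas. -/
def IsImmersion {A : Type w} {B : Type w'} [L.Structure A] [L.Structure B]
    (f : A →[L] B) : Prop :=
  ∀ {n : ℕ} (φ : PosForm L n) (v : Fin n → A), φ.Realize v ↔ φ.Realize (f ∘ v)

/-- A homomorphism `f : A → B` is a strong immersion if `B`, with parameters
from `A` interpreted via `f`, models `T_i(A)`, the full h-inductive
`L(A)`-theory of `A`. -/
def IsStrongImmersion {A : Type w} {B : Type w'} [L.Structure A] [L.Structure B]
    (f : A →[L] B) : Prop :=
  ∀ {n m : ℕ} (φ ψ : PosForm L (n + m)) (a : Fin m → A),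
    (∀ v : Fin n → A, φ.Realize (Fin.append v a) → ψ.Realize (Fin.append v a)) →
    ∀ v : Fin n → B, φ.Realize (Fin.append v (f ∘ a)) → ψ.Realize (Fin.append v (f ∘ a))

/-- `M` is a positively closed (pc) model of `T`: it models `T` and every
homomorphism from `M` into a model of `T` is an immersion. -/
def IsPC (T : Set (HInd L)) (M : Type (max u v)) [L.Structure M] : Prop :=
  HModels M T ∧
    ∀ (N : Type (max u v)) [L.Structure N], HModels N T → ∀ f : M →[L] N, IsImmersion f

/-- `T` has the joint continuation property (is positively complete). -/
def JCP (T : Set (HInd L)) : Prop :=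
  ∀ (A : Type (max u v)) [L.Structure A] (B : Type (max u v)) [L.Structure B],
    HModels A T → HModels B T →
      ∃ (C : Type (max u v)) (_ : L.Structure C),
        HModels C T ∧ Nonempty (A →[L] C) ∧ Nonempty (B →[L] C)

/-- `T₁` and `T₂` are `T`-complete. -/
def TComplete (T₁ T₂ T : Set (HInd L)) : Prop :=
  ∀ (A : Type (max u v)) [L.Structure A] (B : Type (max u v)) [L.Structure B],
    HModels A T₁ → HModels B T₂ →
      ∃ (C : Type (max u v)) (_ : L.Structure C),
        HModels C T ∧ Nonempty (A →[L] C) ∧ Nonempty (B →[L] C)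

/-- `M` is an `[h]`-strong amalgamation basis of `T`: any two homomorphic
continuations of `M` into models of `T` amalgamate into a model of `T`,
identifying no points outside the images of `M`. -/
def HStrongBasis (T : Set (HInd L)) (M : Type (max u v)) [L.Structure M] : Prop :=
  ∀ (C : Type (max u v)) [L.Structure C] (D : Type (max u v)) [L.Structure D],
    HModels C T → HModels D T → ∀ (f : M →[L] C) (g : M →[L] D),
      ∃ (E : Type (max u v)) (_ : L.Structure E) (f' : C →[L] E) (g' : D →[L] E),
        HModels E T ∧ f'.comp f = g'.comp g ∧
          ∀ c d, f' c = g' d → c ∈ Set.range f ∧ d ∈ Set.range g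

/-!
An immersion `i : A → B` and a homomorphism `f : A → C` into a model of `T` amalgamate without
identifying points of `C` outside `f(A)`. Since `i` reflects positive formulas, every finite part
of the positive diagram of `B` over `A` is realized in `A` by some map `B → A`. Along an
ultrafilter on these finite parts, the maps `B → A → C` define a homomorphism from `B` into an
ultrapower of `C`, which models `T` by Łoś's theorem; a point of `C` that meets the image of `B`
there is a limit of points of `f(A)`, hence lies in `f(A)`.

Given continuations `A → C` and `A → D`, amalgamate `i` with each of them in this way, and then
amalgamate the two results strongly over `B`.
-/

namespace PosForm

variable {M : Type w} {N : Type w'} [L.Structure M] [L.Structure N]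

theorem Realize.map (h : M →[L] N) {n : ℕ} {φ : PosForm L n} {v : Fin n → M}
    (hφ : φ.Realize v) : φ.Realize (h ∘ v) := by
  induction φ with
  | falsum => exact hφ.elim
  | equal t u =>
    change t.realize (h ∘ v) = u.realize (h ∘ v)
    rw [HomClass.realize_term, HomClass.realize_term]
    exact congrArg h hφ
  | rel R ts =>
    change Structure.RelMap R fun j => (ts j).realize (h ∘ v)
    simp only [HomClass.realize_term]
    exact HomClass.map_rel h R _ hφ
  | and φ ψ ihφ ihψ => exact ⟨ihφ hφ.1, ihψ hφ.2⟩
  | or φ ψ ihφ ihψ => exact hφ.imp ihφ ihψ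
  | ex φ ih =>
    obtain ⟨x, hx⟩ := hφ
    exact ⟨h x, by simpa only [Fin.comp_snoc] using ih hx⟩

def relabel : ∀ {m n : ℕ}, (Fin m → Fin n) → PosForm L m → PosForm L n
  | _, _, _, .falsum => .falsum
  | _, _, ρ, .equal t u => .equal (t.relabel ρ) (u.relabel ρ)
  | _, _, ρ, .rel R ts => .rel R fun j => (ts j).relabel ρ
  | _, _, ρ, .and φ ψ => .and (φ.relabel ρ) (ψ.relabel ρ)
  | _, _, ρ, .or φ ψ => .or (φ.relabel ρ) (ψ.relabel ρ)
  | _, n, ρ, .ex φ => .ex (φ.relabel (Fin.snoc (Fin.castSucc ∘ ρ) (Fin.last n)))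

theorem realize_relabel {m n : ℕ} (ρ : Fin m → Fin n) (φ : PosForm L m) (v : Fin n → M) :
    (φ.relabel ρ).Realize v ↔ φ.Realize (v ∘ ρ) := by
  induction φ generalizing n with
  | falsum => exact Iff.rfl
  | equal t u => simp only [relabel, Realize, Term.realize_relabel]
  | rel R ts => simp only [relabel, Realize, Term.realize_relabel]
  | and φ ψ ihφ ihψ => simp only [relabel, Realize, ihφ, ihψ]
  | or φ ψ ihφ ihψ => simp only [relabel, Realize, ihφ, ihψ]
  | ex φ ih =>
    simp only [relabel, Realize, ih, Fin.comp_snoc, Fin.snoc_last, ← Function.comp_assoc,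
      Fin.snoc_comp_castSucc]

def exs : ∀ {k n : ℕ}, PosForm L (k + n) → PosForm L k
  | _, 0, φ => φ
  | _, _ + 1, φ => exs φ.ex

theorem realize_exs {k n : ℕ} (φ : PosForm L (k + n)) (v : Fin k → M) :
    (exs φ).Realize v ↔ ∃ w : Fin n → M, φ.Realize (Fin.append v w) := by
  induction n with
  | zero =>
    refine ⟨fun h => ⟨Fin.elim0, by rwa [Fin.append_elim0]⟩, fun ⟨w, hw⟩ => ?_⟩
    rwa [Subsingleton.elim w Fin.elim0, Fin.append_elim0] at hw
  | succ n ih =>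
    change (exs φ.ex).Realize v ↔ _
    rw [ih]
    constructor
    · rintro ⟨w, x, hx⟩
      exact ⟨Fin.snoc w x, by rwa [Fin.append_snoc]⟩
    · rintro ⟨w, hw⟩
      refine ⟨Fin.init w, w (Fin.last n), ?_⟩
      rwa [← Fin.append_snoc, Fin.snoc_init_self]

/-- `∃ x, x = x` stands in for the missing verum, so the empty conjunction holds exactly in
nonempty structures. -/
def conj {n : ℕ} : List (PosForm L n) → PosForm L n
  | [] => .ex (.equal (.var (Fin.last n)) (.var (Fin.last n)))
  | φ :: l => .and φ (conj l)

theorem realize_conj [Nonempty M] {n : ℕ} (l : List (PosForm L n)) (v : Fin n → M) :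
    (conj l).Realize v ↔ ∀ φ ∈ l, φ.Realize v := by
  induction l with
  | nil =>
    exact ⟨fun _ _ h => (List.not_mem_nil h).elim, fun _ => ⟨Classical.arbitrary M, rfl⟩⟩
  | cons φ l ih => simp only [conj, Realize, ih, List.forall_mem_cons]

end PosForm

def homOfRealize {M : Type w} {N : Type w'} [L.Structure M] [L.Structure N] (g : M → N)
    (hg : ∀ {n : ℕ} (φ : PosForm L n) (v : Fin n → M),
      φ.Realize v → φ.Realize (g ∘ v)) :
    M →[L] N where
  toFun := g
  map_fun' {l} F x := by
    have h := hg (.equal (.func F fun k => .var k.castSucc) (.var (Fin.last l)))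
      (Fin.snoc x (Structure.funMap F x)) (by simp [PosForm.Realize])
    simpa [PosForm.Realize, Fin.comp_snoc, Function.comp_def] using h.symm
  map_rel' {l} R x hx := hg (.rel R .var) x hx

def PosForm.toBoundedFormula : ∀ {n : ℕ}, PosForm L n → L.BoundedFormula Empty n
  | _, .falsum => ⊥
  | _, .equal t u => (t.relabel Sum.inr).bdEqual (u.relabel Sum.inr)
  | _, .rel R ts => R.boundedFormula fun j => (ts j).relabel Sum.inr
  | _, .and φ ψ => φ.toBoundedFormula ⊓ ψ.toBoundedFormula
  | _, .or φ ψ => φ.toBoundedFormula ⊔ ψ.toBoundedFormula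
  | _, .ex φ => φ.toBoundedFormula.ex

theorem PosForm.realize_toBoundedFormula {M : Type w} [L.Structure M] {n : ℕ} (φ : PosForm L n)
    (e : Empty → M) (v : Fin n → M) : φ.toBoundedFormula.Realize e v ↔ φ.Realize v := by
  induction φ with
  | falsum => exact Iff.rfl
  | equal t u => simp [toBoundedFormula, Realize, Term.realize_relabel, Sum.elim_comp_inr]
  | rel R ts => simp [toBoundedFormula, Realize, Term.realize_relabel, Sum.elim_comp_inr]
  | and φ ψ ihφ ihψ => simp [toBoundedFormula, Realize, ihφ, ihψ]
  | or φ ψ ihφ ihψ => simp [toBoundedFormula, Realize, ihφ, ihψ]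
  | ex φ ih => simp only [toBoundedFormula, BoundedFormula.realize_ex, ih]; rfl

section Ultraproduct

variable {ι : Type*} {M : ι → Type*} [∀ j, L.Structure (M j)] [∀ j, Nonempty (M j)]
  {𝒰 : Ultrafilter ι}

theorem PosForm.realize_ultraproduct {n : ℕ} (φ : PosForm L n) (x : Fin n → ∀ j, M j) :
    φ.Realize (M := (𝒰 : Filter ι).Product M) (fun k => x k) ↔
      ∀ᶠ j in (𝒰 : Filter ι), φ.Realize fun k => x k j := by
  refine (φ.realize_toBoundedFormula _ _).symm.trans <|
    (Ultraproduct.boundedFormula_realize_cast _ Empty.elim x).trans ?_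
  simp only [PosForm.realize_toBoundedFormula]

theorem HModels.ultraproduct {T : Set (HInd L)} (h : ∀ j, HModels (M j) T) :
    HModels ((𝒰 : Filter ι).Product M) T := by
  intro s hs v hv
  let x : Fin s.n → ∀ j, M j := fun k => (v k).out
  have hx : v = fun k => (x k : (𝒰 : Filter ι).Product M) :=
    funext fun k => (Quotient.out_eq' (v k)).symm
  rw [hx, PosForm.realize_ultraproduct] at hv ⊢
  exact hv.mono fun j => h j s hs _

end Ultraproduct

structure ParamPosForm (L : FirstOrder.Language.{u, v}) (X : Type w) where
  {n : ℕ}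
  form : PosForm L n
  params : Fin n → X

def ParamPosForm.Realize {X : Type w} {M : Type w'} [L.Structure M] (p : ParamPosForm L X)
    (g : X → M) : Prop :=
  p.form.Realize (g ∘ p.params)

noncomputable def ParamPosForm.conjAlong {X : Type w} {m : ℕ} [Nonempty (Fin m)]
    (Φ : List (ParamPosForm L X)) (e : Fin m → X) : PosForm L m :=
  PosForm.conj (Φ.map fun p => p.form.relabel (Function.invFun e ∘ p.params))

theorem ParamPosForm.realize_conjAlong {X : Type w} {M : Type w'} [L.Structure M] [Nonempty M]
    {m : ℕ} [Nonempty (Fin m)] (Φ : List (ParamPosForm L X)) {e : Fin m → X}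
    (he : ∀ p ∈ Φ, Set.range p.params ⊆ Set.range e) (g : X → M) :
    (conjAlong Φ e).Realize (g ∘ e) ↔ ∀ p ∈ Φ, p.Realize g := by
  simp only [conjAlong, PosForm.realize_conj, List.forall_mem_map, PosForm.realize_relabel]
  refine forall₂_congr fun p hp => ?_
  have hinv : e ∘ Function.invFun e ∘ p.params = p.params :=
    funext fun j => Function.invFun_eq (he p hp ⟨j, rfl⟩)
  rw [Function.comp_assoc, hinv, Realize]

section Immersion

variable {A : Type w} {B : Type w'} [L.Structure A] [L.Structure B] {i : A →[L] B}

theorem IsImmersion.isEmpty [IsEmpty A] (hi : IsImmersion i) : IsEmpty B where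
  false b := by
    obtain ⟨a, -⟩ := (hi (.ex (.equal (.var 0) (.var 0))) Fin.elim0).2 ⟨b, rfl⟩
    exact isEmptyElim a

theorem IsImmersion.exists_realize_append (hi : IsImmersion i) {k n : ℕ}
    (φ : PosForm L (k + n)) (as : Fin k → A) (bs : Fin n → B)
    (h : φ.Realize (Fin.append (i ∘ as) bs)) :
    ∃ bs' : Fin n → A, φ.Realize (Fin.append as bs') :=
  (PosForm.realize_exs φ as).1 <| (hi _ as).2 <| (PosForm.realize_exs φ _).2 ⟨bs, h⟩

theorem IsImmersion.exists_realize_finset [Nonempty A] (hi : IsImmersion i)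
    (Φ : Finset (ParamPosForm L (A ⊕ B))) (hΦ : ∀ p ∈ Φ, p.Realize (Sum.elim i id)) :
    ∃ τ : B → A, ∀ p ∈ Φ, p.Realize (Sum.elim id τ) := by
  obtain ⟨a₀⟩ := ‹Nonempty A›
  have hS : (⋃ p ∈ Φ, Set.range p.params).Finite :=
    Φ.finite_toSet.biUnion fun p _ => Set.finite_range p.params
  -- `a₀` makes the set of variables nonempty, as `invFun` needs, and is the default value of `τ`
  obtain ⟨k, as, -, has⟩ := ((hS.preimage Sum.inl_injective.injOn).insert a₀).fin_param
  obtain ⟨n, bs, hbs, hbs'⟩ := (hS.preimage Sum.inr_injective.injOn).fin_param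
  let e : Fin (k + n) → A ⊕ B := Fin.append (Sum.inl ∘ as) (Sum.inr ∘ bs)
  have he : ∀ p ∈ Φ, Set.range p.params ⊆ Set.range e := by
    rintro p hp _ ⟨j, rfl⟩
    have hj : p.params j ∈ ⋃ p ∈ Φ, Set.range p.params := Set.mem_biUnion hp ⟨j, rfl⟩
    rcases hpj : p.params j with a | b <;> rw [hpj] at hj
    · obtain ⟨l, hl⟩ : a ∈ Set.range as := has ▸ Set.mem_insert_of_mem _ hj
      exact ⟨Fin.castAdd n l, by simp [e, hl]⟩
    · obtain ⟨l, hl⟩ : b ∈ Set.range bs := hbs' ▸ hj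
      exact ⟨Fin.natAdd k l, by simp [e, hl]⟩
  have : Nonempty (Fin (k + n)) := by
    obtain ⟨l, -⟩ : a₀ ∈ Set.range as := has ▸ Set.mem_insert a₀ _
    exact ⟨Fin.castAdd n l⟩
  have hΦe : ∀ p ∈ Φ.toList, Set.range p.params ⊆ Set.range e := by simpa using he
  have : Nonempty B := ⟨i a₀⟩
  have hB : Sum.elim i id ∘ e = Fin.append (i ∘ as) bs := by
    funext l; refine Fin.addCases (fun l => ?_) (fun l => ?_) l <;> simp [e]
  obtain ⟨bs', hbs'⟩ := hi.exists_realize_append (ParamPosForm.conjAlong Φ.toList e) as bs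
    (hB ▸ (ParamPosForm.realize_conjAlong _ hΦe _).2 fun p hp => hΦ p (Finset.mem_toList.1 hp))
  let τ := Function.extend bs bs' fun _ => a₀
  have hA : Sum.elim id τ ∘ e = Fin.append as bs' := by
    funext l; refine Fin.addCases (fun l => ?_) (fun l => ?_) l <;> simp [e, τ, hbs.extend_apply]
  exact ⟨τ, fun p hp => (ParamPosForm.realize_conjAlong _ hΦe _).1 (hA ▸ hbs') p
    (Finset.mem_toList.2 hp)⟩

end Immersion

universe w''

section Amalgamation

variable {A : Type w} {B : Type w'} {C : Type w''} [L.Structure A] [L.Structure B] [L.Structure C]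
  {i : A →[L] B}

/-- Only nullary relations constrain a homomorphism out of the empty `B`, and these pass
through `A`. -/
def IsImmersion.homOfIsEmpty [IsEmpty A] (hi : IsImmersion i) (f : A →[L] C) : B →[L] C :=
  haveI := hi.isEmpty
  homOfRealize isEmptyElim fun φ v hv => by
    have hv' : φ.Realize (i ∘ fun j => isEmptyElim (v j)) := by
      convert hv using 2
    convert ((hi φ _).2 hv').map f using 2
    exact funext fun j => isEmptyElim (v j)

theorem IsImmersion.exists_strongAmalgam_of_nonempty [Nonempty A] (hi : IsImmersion i)
    (f : A →[L] C) {T : Set (HInd L)} (hC : HModels C T) :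
    ∃ (E : Type (max u v w w' w'')) (_ : L.Structure E) (β : B →[L] E) (γ : C →[L] E),
      HModels E T ∧ β.comp i = γ.comp f ∧ ∀ b c, β b = γ c → c ∈ Set.range f := by
  classical
  have : Nonempty C := ⟨f (Classical.arbitrary A)⟩
  let I := Finset (ParamPosForm L (A ⊕ B))
  choose τ hτ using fun Φ : I =>
    hi.exists_realize_finset (Φ.filter (·.Realize (Sum.elim i id))) fun p hp =>
      (Finset.mem_filter.1 hp).2
  let 𝒰 : Ultrafilter I := .of Filter.atTop
  have eventually_realize (p : ParamPosForm L (A ⊕ B)) (hp : p.Realize (Sum.elim i id)) :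
      ∀ᶠ Φ in (𝒰 : Filter I), p.Realize (Sum.elim id (τ Φ)) :=
    Ultrafilter.of_le _ <| (Filter.eventually_ge_atTop {p}).mono fun Φ hΦ =>
      hτ Φ p (Finset.mem_filter.2 ⟨hΦ (Finset.mem_singleton_self p), hp⟩)
  let E := (𝒰 : Filter I).Product fun _ => C
  let β : B →[L] E := homOfRealize (fun b => ((fun Φ => f (τ Φ b) : I → C) : E))
    fun φ v hv => (PosForm.realize_ultraproduct φ _).2 <|
      (eventually_realize ⟨φ, Sum.inr ∘ v⟩ hv).mono fun Φ hΦ => hΦ.map f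
  let γ : C →[L] E := homOfRealize (fun c => ((fun _ => c : I → C) : E)) fun φ v hv =>
    (PosForm.realize_ultraproduct φ _).2 (Filter.Eventually.of_forall fun _ => hv)
  refine ⟨E, inferInstance, β, γ, HModels.ultraproduct fun _ => hC, Hom.ext fun a => ?_,
    fun b c hbc => ?_⟩
  · have h := eventually_realize ⟨.equal (.var 0) (.var 1), ![.inl a, .inr (i a)]⟩ rfl
    exact Quotient.sound (h.mono fun Φ hΦ => congrArg f hΦ.symm)
  · have h : ∀ᶠ Φ in (𝒰 : Filter I), f (τ Φ b) = c := Quotient.exact hbc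
    obtain ⟨Φ, hΦ⟩ := h.exists
    exact ⟨τ Φ b, hΦ⟩

end Amalgamation

theorem IsImmersion.exists_strongAmalgam {A B C : Type (max u v)} [L.Structure A] [L.Structure B]
    [L.Structure C] {i : A →[L] B} (hi : IsImmersion i) (f : A →[L] C) {T : Set (HInd L)}
    (hC : HModels C T) :
    ∃ (E : Type (max u v)) (_ : L.Structure E) (β : B →[L] E) (γ : C →[L] E),
      HModels E T ∧ β.comp i = γ.comp f ∧ ∀ b c, β b = γ c → c ∈ Set.range f := by
  rcases isEmpty_or_nonempty A with hA | hA
  · have := hi.isEmpty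
    exact ⟨C, inferInstance, hi.homOfIsEmpty f, Hom.id L C, hC, Hom.ext isEmptyElim,
      fun b => isEmptyElim b⟩
  · exact hi.exists_strongAmalgam_of_nonempty f hC

theorem hStrongBasis_of_immersed_general (T : Set (HInd L))
    (B : Type (max u v)) [L.Structure B] (hBbasis : HStrongBasis T B)
    (A : Type (max u v)) [L.Structure A]
    (i : A →[L] B) (hi : IsImmersion i) : HStrongBasis T A := by
  intro C _ D _ hC hD f g
  obtain ⟨C', _, βC, γC, hC', hcommC, hstrC⟩ := hi.exists_strongAmalgam f hC
  obtain ⟨D', _, βD, γD, hD', hcommD, hstrD⟩ := hi.exists_strongAmalgam g hD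
  obtain ⟨E, _, p, q, hE, hcomm, hstr⟩ := hBbasis C' D' hC' hD' βC βD
  refine ⟨E, inferInstance, p.comp γC, q.comp γD, hE, ?_, fun c d hcd => ?_⟩
  · rw [Hom.comp_assoc, Hom.comp_assoc, ← hcommC, ← hcommD, ← Hom.comp_assoc, hcomm,
      Hom.comp_assoc]
  · obtain ⟨⟨b, hb⟩, ⟨b', hb'⟩⟩ := hstr (γC c) (γD d) hcd
    exact ⟨hstrC b c hb, hstrD b' d hb'⟩

/-- heredity of `[h]`-strong amalgamation bases under immersion. -/
theorem hStrongBasis_of_immersed (T : Set (HInd L))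
    (B : Type (max u v)) [L.Structure B] (hB : HModels B T) (hBbasis : HStrongBasis T B)
    (A : Type (max u v)) [L.Structure A] (hA : HModels A T)
    (i : A →[L] B) (hi : IsImmersion i) : HStrongBasis T A :=
  hStrongBasis_of_immersed_general T B hBbasis A i hi

end PositiveLogic
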